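/- Let T be a quantum channel on M_d with Jamiolkowski state τ := C(T)/d, where C(T) is the Choi matrix of T. Then det T is real, tr(τ²) is real, and det T ≤ (tr τ²)^{d²/2}. -/

import Mathlib

open Matrix
open scoped Kronecker ComplexOrder

noncomputable section

/-- `Mat d` is the space `M_d` of `d × d` complex matrices. -/
abbrev Mat (d : ℕ) := Matrix (Fin d) (Fin d) ℂ

/-- The Choi matrix `C(T) = Σ_{i,j} E_{ij} ⊗ T(E_{ij})` of a linear map on `M_d`. -/
def choi {d : ℕ} (T : Mat d →ₗ[ℂ] Mat d) :
    Matrix (Fin d × Fin d) (Fin d × Fin d) ℂ :=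
  ∑ i : Fin d, ∑ j : Fin d,
    (single i j (1 : ℂ)) ⊗ₖ T (single i j (1 : ℂ))

/-- A linear map on `M_d` is trace-preserving if it preserves the trace. -/
def IsTracePreserving {d : ℕ} (T : Mat d →ₗ[ℂ] Mat d) : Prop :=
  ∀ A : Mat d, (T A).trace = A.trace

/-- A linear map on `M_d` is completely positive if its Choi matrix is positive
semidefinite. -/
def IsCompletelyPositive {d : ℕ} (T : Mat d →ₗ[ℂ] Mat d) : Prop :=
  (choi T).PosSemidef

/-- A quantum channel is a completely positive trace-preserving linear map. -/
def IsChannel {d : ℕ} (T : Mat d →ₗ[ℂ] Mat d) : Prop :=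
  IsTracePreserving T ∧ IsCompletelyPositive T

/-!
In the basis of matrix units the matrix `M` of `T` has the entries of the Choi matrix `C`,
rearranged by `((k, l), (i, j)) ↦ ((i, k), (j, l))`. Hermiticity of `C` therefore makes `M` equal
to its entrywise conjugate after swapping the two tensor factors of rows and columns, so `det T`
is real; it also makes `tr (C²)` the squared Frobenius norm of `C`, which is that of `M`.
Finally `|det M|² = det (Mᴴ M) ≤ (tr (Mᴴ M) / d²) ^ d²` by AM–GM on the eigenvalues of `Mᴴ M`.
-/

lemma Real.prod_le_sum_div_card_pow {ι : Type*} [Fintype ι] {z : ι → ℝ} (hz : ∀ i, 0 ≤ z i) :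
    ∏ i, z i ≤ ((∑ i, z i) / Fintype.card ι) ^ Fintype.card ι := by
  rcases isEmpty_or_nonempty ι with hι | hι
  · simp
  have hcard : (Fintype.card ι : ℝ) ≠ 0 := by positivity
  have hgm := Real.geom_mean_le_arith_mean Finset.univ (fun _ ↦ 1) z (by simp)
    (by simp [Fintype.card_pos]) fun i _ ↦ hz i
  simp only [Real.rpow_one, Finset.sum_const, Finset.card_univ, nsmul_eq_mul, mul_one,
    one_mul] at hgm
  have hprod : 0 ≤ ∏ i, z i := Finset.prod_nonneg fun i _ ↦ hz i
  calc ∏ i, z i = ((∏ i, z i) ^ (Fintype.card ι : ℝ)⁻¹) ^ Fintype.card ι := by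
        rw [← Real.rpow_natCast, ← Real.rpow_mul hprod, inv_mul_cancel₀ hcard, Real.rpow_one]
    _ ≤ _ := pow_le_pow_left₀ (Real.rpow_nonneg hprod _) hgm _

namespace Matrix

variable {m n 𝕜 : Type*} [Fintype m] [Fintype n] [RCLike 𝕜]

lemma trace_conjTranspose_mul_self_eq_sum_norm_sq (A : Matrix m n 𝕜) :
    (Aᴴ * A).trace = ((∑ i, ∑ j, ‖A i j‖ ^ 2 : ℝ) : 𝕜) := by
  rw [Finset.sum_comm]
  push_cast
  simp only [trace, diag_apply, mul_apply, conjTranspose_apply, RCLike.star_def, RCLike.conj_mul]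

lemma IsHermitian.trace_mul_self {A : Matrix n n 𝕜} (hA : A.IsHermitian) :
    (A * A).trace = ((∑ i, ∑ j, ‖A i j‖ ^ 2 : ℝ) : 𝕜) := by
  nth_rewrite 1 [← hA.eq]
  exact trace_conjTranspose_mul_self_eq_sum_norm_sq A

variable [DecidableEq n]

lemma PosSemidef.re_det_le {A : Matrix n n 𝕜} (hA : A.PosSemidef) :
    RCLike.re A.det ≤ (RCLike.re A.trace / Fintype.card n) ^ Fintype.card n := by
  rw [hA.isHermitian.det_eq_prod_eigenvalues, hA.isHermitian.trace_eq_sum_eigenvalues,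
    ← RCLike.ofReal_prod, ← RCLike.ofReal_sum, RCLike.ofReal_re, RCLike.ofReal_re]
  exact Real.prod_le_sum_div_card_pow hA.eigenvalues_nonneg

lemma norm_det_sq_le (A : Matrix n n 𝕜) :
    ‖A.det‖ ^ 2 ≤ ((∑ i, ∑ j, ‖A i j‖ ^ 2) / Fintype.card n) ^ Fintype.card n := by
  have hdet : (Aᴴ * A).det = ((‖A.det‖ ^ 2 : ℝ) : 𝕜) := by
    rw [det_mul, det_conjTranspose, RCLike.star_def, RCLike.conj_mul]
    push_cast
    rfl
  have h := (posSemidef_conjTranspose_mul_self A).re_det_le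
  rwa [hdet, trace_conjTranspose_mul_self_eq_sum_norm_sq, RCLike.ofReal_re,
    RCLike.ofReal_re] at h

lemma norm_det_le_rpow (A : Matrix n n 𝕜) :
    ‖A.det‖ ≤ ((∑ i, ∑ j, ‖A i j‖ ^ 2) / Fintype.card n) ^ ((Fintype.card n : ℝ) / 2) := by
  have hnn : 0 ≤ (∑ i, ∑ j, ‖A i j‖ ^ 2) / Fintype.card n := by positivity
  rw [div_eq_mul_inv (Fintype.card n : ℝ), Real.rpow_mul hnn, Real.rpow_natCast, ← one_div,
    ← Real.sqrt_eq_rpow, ← Real.sqrt_sq (norm_nonneg A.det)]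
  exact Real.sqrt_le_sqrt (norm_det_sq_le A)

end Matrix

section Channel

variable {d : ℕ}

def transferMatrix (T : Mat d →ₗ[ℂ] Mat d) : Matrix (Fin d × Fin d) (Fin d × Fin d) ℂ :=
  LinearMap.toMatrix (stdBasis ℂ (Fin d) (Fin d)) (stdBasis ℂ (Fin d) (Fin d)) T

lemma det_transferMatrix (T : Mat d →ₗ[ℂ] Mat d) :
    (transferMatrix T).det = LinearMap.det T :=
  LinearMap.det_toMatrix _ T

lemma choi_apply (T : Mat d →ₗ[ℂ] Mat d) (i k j l : Fin d) :
    choi T (i, k) (j, l) = T (single i j 1) k l := by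
  simp [choi, Matrix.sum_apply, single_apply, ite_and]

lemma transferMatrix_apply (T : Mat d →ₗ[ℂ] Mat d) (k l i j : Fin d) :
    transferMatrix T (k, l) (i, j) = choi T (i, k) (j, l) := by
  rw [transferMatrix, LinearMap.toMatrix_apply, stdBasis_eq_single, choi_apply]
  simp [stdBasis]

lemma transferMatrix_eq_map_conj_submatrix_swap {T : Mat d →ₗ[ℂ] Mat d}
    (hC : (choi T).IsHermitian) :
    transferMatrix T = ((transferMatrix T).submatrix (Equiv.prodComm _ _)
      (Equiv.prodComm _ _)).map (starRingEnd ℂ) := by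
  ext ⟨k, l⟩ ⟨i, j⟩
  simp only [map_apply, submatrix_apply, Equiv.prodComm_apply, Prod.swap_prod_mk,
    transferMatrix_apply, starRingEnd_apply]
  exact (hC.apply (i, k) (j, l)).symm

lemma star_det_eq_of_isHermitian_choi {T : Mat d →ₗ[ℂ] Mat d} (hC : (choi T).IsHermitian) :
    star (LinearMap.det T) = LinearMap.det T := by
  rw [← det_transferMatrix]
  conv_rhs => rw [transferMatrix_eq_map_conj_submatrix_swap hC]
  rw [← RingHom.mapMatrix_apply, ← RingHom.map_det, det_submatrix_equiv_self, starRingEnd_apply]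

lemma sum_norm_sq_transferMatrix (T : Mat d →ₗ[ℂ] Mat d) :
    ∑ a, ∑ b, ‖transferMatrix T a b‖ ^ 2 = ∑ a, ∑ b, ‖choi T a b‖ ^ 2 := by
  simp only [← Fintype.sum_prod_type']
  refine Fintype.sum_equiv ((Equiv.prodProdProdComm _ _ _ _).trans
    ((Equiv.prodComm _ _).prodCongr (Equiv.prodComm _ _))) _ _ ?_
  rintro ⟨⟨k, l⟩, i, j⟩
  simp [transferMatrix_apply]

end Channel

/-- for a quantum channel `T` on `M_d` with Jamiolkowski state
`τ = C(T)/d`, the determinant of `T` and `tr(τ²)` are real and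
`det T ≤ (tr τ²)^(d²/2)`. -/
theorem det_le_purity_pow {d : ℕ} (T : Mat d →ₗ[ℂ] Mat d) (hT : IsChannel T) :
    ∃ r s : ℝ, LinearMap.det T = (r : ℂ) ∧
      (((d : ℂ)⁻¹ • choi T) * ((d : ℂ)⁻¹ • choi T)).trace = (s : ℂ) ∧
      r ≤ s ^ (((d : ℝ) ^ 2) / 2) := by
  have hC : (choi T).IsHermitian := hT.2.isHermitian
  refine ⟨(LinearMap.det T).re, (∑ a, ∑ b, ‖choi T a b‖ ^ 2) / d ^ 2,
    (Complex.conj_eq_iff_re.mp (star_det_eq_of_isHermitian_choi hC)).symm, ?_, ?_⟩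
  · rw [smul_mul_smul_comm, trace_smul, hC.trace_mul_self, smul_eq_mul, div_eq_inv_mul,
      Complex.ofReal_mul]
    congr 1
    push_cast
    ring
  · calc (LinearMap.det T).re ≤ ‖(transferMatrix T).det‖ := by
          rw [det_transferMatrix]; exact Complex.re_le_norm _
      _ ≤ _ := norm_det_le_rpow _
      _ = _ := by rw [sum_norm_sq_transferMatrix]; simp [sq]
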